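/- arXiv:0806.1705 — 3 statements merged into one kernel-verified Lean document; each statement's English description precedes it below -/
import Mathlib

section
/- Let T : V → V be a linear map on an n-dimensional complex vector space given in an ordered basis {v_1,…,v_n} by a single Jordan block with eigenvalue λ where |λ| = 1. Then for every nonzero v ∈ V there exists a unique k(v) ∈ ℕ ∪ {0} such that every cluster point of the sequence C(m, k(v))^(−1) · T^m(v) lies in span{v_1} \ {0}. Explicitly, if v = Σ α_j v_j, then k(v) = max{ j : α_j ≠ 0 } − 1. -/
/-!
The `(i, j)` entry of `Tᵐ` is `C(m, j - i) λ^(m - (j - i))` for `i ≤ j` and `0` otherwise. Let `j₀`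
be the last nonzero coordinate of `v`. Since `C(m, d) = o(C(m, k))` for `d < k` and `|λ| = 1`,
`C(m, k)⁻¹ Tᵐ v → 0` for `k > j₀`, while for `k = j₀` the sequence is `λ^(m - j₀) v_{j₀} e₀ + o(1)`,
so its cluster points exist and lie on the circle of radius `|v_{j₀}|` in `span {e₀}`. For `k < j₀`
the sequence for `j₀` is the one for `k` times `C(m, k) / C(m, j₀) → 0`, so a cluster point `p`
for `k` would make `0 • p = 0` a cluster point for `j₀`.
-/

open Filter Topology Asymptotics

theorem tendsto_choose_div_choose_of_lt {d k : ℕ} (h : d < k) :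
    Tendsto (fun m : ℕ => (m.choose d : ℝ) / m.choose k) atTop (𝓝 0) := by
  have hpow : (fun m : ℕ => (m : ℝ) ^ d) =o[atTop] fun m => (m : ℝ) ^ k :=
    (isLittleO_pow_pow_atTop_of_lt h).comp_tendsto tendsto_natCast_atTop_atTop
  exact ((isTheta_choose d).isBigO.trans_isLittleO
    (hpow.trans_isBigO (isTheta_choose k).symm.isBigO)).tendsto_div_nhds_zero

theorem MapClusterPt.prodMk_of_tendsto {α X Y : Type*} [TopologicalSpace X] [TopologicalSpace Y]
    {l : Filter α} {f : α → X} {g : α → Y} {x : X} {y : Y} (hf : MapClusterPt x l f)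
    (hg : Tendsto g l (𝓝 y)) : MapClusterPt (x, y) l fun a => (f a, g a) := by
  rw [((𝓝 x).basis_sets.prod_nhds (𝓝 y).basis_sets).mapClusterPt_iff_frequently]
  rintro ⟨s, t⟩ ⟨hs, ht⟩
  exact ((mapClusterPt_iff_frequently.1 hf s hs).and_eventually (hg ht)).mono fun _ h => h

theorem MapClusterPt.of_tendsto_sub {α E : Type*} [TopologicalSpace E] [AddCommGroup E]
    [IsTopologicalAddGroup E] {l : Filter α} {f g : α → E} {p : E} (hf : MapClusterPt p l f)
    (hfg : Tendsto (fun a => f a - g a) l (𝓝 0)) : MapClusterPt p l g := by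
  simpa [Function.comp_def] using
    (hf.prodMk_of_tendsto hfg).tendsto_comp (continuous_sub.tendsto (p, 0))

theorem MapClusterPt.eq_of_tendsto {α X : Type*} [TopologicalSpace X] [T2Space X] {l : Filter α}
    {f : α → X} {p q : X} (hp : MapClusterPt p l f) (hf : Tendsto f l (𝓝 q)) : p = q :=
  eq_of_nhds_neBot (hp.clusterPt.mono hf).neBot

def IsJordanBlock {R : Type*} [Zero R] [One R] {n : ℕ} (lam : R) (T : Matrix (Fin n) (Fin n) R) :
    Prop :=
  ∀ i j : Fin n, T i j = if (j : ℕ) = (i : ℕ) then lam else if (j : ℕ) = (i : ℕ) + 1 then 1 else 0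

-- The truncated `m - (b - a)` is harmless: the binomial coefficient vanishes when `b - a > m`.
def jordanPowEntry {R : Type*} [CommSemiring R] (lam : R) (m a b : ℕ) : R :=
  if a ≤ b then (m.choose (b - a) : R) * lam ^ (m - (b - a)) else 0

theorem jordanPowEntry_succ {R : Type*} [CommSemiring R] (lam : R) (m a b : ℕ) :
    jordanPowEntry lam (m + 1) a b =
      lam * jordanPowEntry lam m a b + jordanPowEntry lam m (a + 1) b := by
  unfold jordanPowEntry
  rcases lt_or_ge b a with hba | hab
  · simp [hba.not_ge, show ¬ a + 1 ≤ b by omega]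
  obtain ⟨d, rfl⟩ := Nat.exists_eq_add_of_le hab
  rcases d with _ | d
  · simp [pow_succ, mul_comm]
  rw [if_pos hab, if_pos hab, if_pos (by omega), show a + (d + 1) - a = d + 1 by omega,
    show a + (d + 1) - (a + 1) = d by omega, Nat.choose_succ_succ', Nat.succ_sub_succ]
  rcases le_or_gt (d + 1) m with hdm | hmd
  · rw [show m - d = m - (d + 1) + 1 by omega]
    push_cast
    ring
  · simp [Nat.choose_eq_zero_of_lt hmd]

theorem jordan_pow_apply {R : Type*} [CommSemiring R] {n : ℕ} {lam : R}
    {T : Matrix (Fin n) (Fin n) R} (hT : IsJordanBlock lam T)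
    (m : ℕ) (i j : Fin n) : (T ^ m) i j = jordanPowEntry lam m i j := by
  induction m generalizing i j with
  | zero =>
    rw [pow_zero, Matrix.one_apply, jordanPowEntry]
    split_ifs with hij hle
    · simp [hij]
    · exact absurd (hij ▸ le_rfl) hle
    · rw [Nat.choose_eq_zero_of_lt (by omega : 0 < (j : ℕ) - i)]
      simp
    · rfl
  | succ m ih =>
    have hrow : ∀ l : ℕ,
        (if l = i then lam else if l = i + 1 then 1 else 0) * jordanPowEntry lam m l j =
          (if l = i then lam * jordanPowEntry lam m i j else 0) +
            (if l = i + 1 then jordanPowEntry lam m (i + 1) j else 0) := by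
      intro l
      split_ifs <;> simp_all
    rw [pow_succ', Matrix.mul_apply, jordanPowEntry_succ]
    simp only [ih, hT _ _]
    rw [Fin.sum_univ_eq_sum_range (fun l =>
        (if l = i then lam else if l = i + 1 then 1 else 0) * jordanPowEntry lam m l j),
      Finset.sum_congr rfl fun l _ => hrow l, Finset.sum_add_distrib, Finset.sum_ite_eq',
      Finset.sum_ite_eq', if_pos (Finset.mem_range.2 i.2)]
    split_ifs with hi
    · rfl
    · simp [jordanPowEntry, show ¬ (i : ℕ) + 1 ≤ j by simp at hi; omega]

theorem tendsto_inv_choose_mul_jordanPowEntry_mul {lam : ℂ} (hlam : ‖lam‖ = 1) {k a b : ℕ}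
    {c : ℂ} (h : c ≠ 0 → b < a + k) :
    Tendsto (fun m => (m.choose k : ℂ)⁻¹ * jordanPowEntry lam m a b * c) atTop (𝓝 0) := by
  rcases eq_or_ne c 0 with rfl | hc
  · simp
  rw [← zero_mul c]
  refine Tendsto.mul_const c ?_
  unfold jordanPowEntry
  split_ifs with hab
  · rw [tendsto_zero_iff_norm_tendsto_zero]
    simpa [norm_pow, hlam, div_eq_inv_mul] using
      tendsto_choose_div_choose_of_lt (d := b - a) (k := k) (by have := h hc; omega)
  · simp

section ScaledOrbit

variable {n : ℕ}

noncomputable def scaledOrbit (T : Matrix (Fin n) (Fin n) ℂ) (v : Fin n → ℂ) (k m : ℕ) :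
    Fin n → ℂ :=
  (m.choose k : ℂ)⁻¹ • (T ^ m).mulVec v

variable {lam : ℂ} {T : Matrix (Fin n) (Fin n) ℂ} {v : Fin n → ℂ} {j₀ : Fin n}

theorem scaledOrbit_apply (hT : IsJordanBlock lam T) (k m : ℕ) (i : Fin n) :
    scaledOrbit T v k m i = ∑ j : Fin n, (m.choose k : ℂ)⁻¹ * jordanPowEntry lam m i j * v j := by
  simp [scaledOrbit, Matrix.mulVec, dotProduct, Finset.mul_sum, jordan_pow_apply hT,
    mul_assoc]

theorem tendsto_scaledOrbit_apply_of_lt (hlam : ‖lam‖ = 1) (hT : IsJordanBlock lam T)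
    {k : ℕ} {i : Fin n} (h : ∀ j : Fin n, v j ≠ 0 → (j : ℕ) < i + k) :
    Tendsto (fun m => scaledOrbit T v k m i) atTop (𝓝 0) := by
  simp_rw [scaledOrbit_apply hT]
  simpa using tendsto_finsetSum Finset.univ fun j _ =>
    tendsto_inv_choose_mul_jordanPowEntry_mul hlam (h j)

theorem tendsto_scaledOrbit_apply_sub (hlam : ‖lam‖ = 1) (hT : IsJordanBlock lam T)
    (hsupp : ∀ j, v j ≠ 0 → j ≤ j₀) {k : ℕ} {i : Fin n} (hik : (i : ℕ) + k = j₀) :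
    Tendsto (fun m => scaledOrbit T v k m i - lam ^ (m - k) * v j₀) atTop (𝓝 0) := by
  have htop : ∀ᶠ m in atTop,
      (m.choose k : ℂ)⁻¹ * jordanPowEntry lam m i j₀ * v j₀ = lam ^ (m - k) * v j₀ := by
    filter_upwards [eventually_ge_atTop k] with m hm
    have hchoose : (m.choose k : ℂ) ≠ 0 := Nat.cast_ne_zero.2 (Nat.choose_pos hm).ne'
    rw [jordanPowEntry, if_pos (by omega), show (j₀ : ℕ) - i = k by omega,
      inv_mul_cancel_left₀ hchoose]
  have hlower : Tendsto (fun m => ∑ j ∈ {j₀}ᶜ,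
      (m.choose k : ℂ)⁻¹ * jordanPowEntry lam m i j * v j) atTop (𝓝 0) := by
    simpa using tendsto_finsetSum _ fun j hj => tendsto_inv_choose_mul_jordanPowEntry_mul hlam
      fun hvj => by
        have := lt_of_le_of_ne (hsupp j hvj) (by simpa using hj)
        rw [Fin.lt_def] at this
        omega
  refine hlower.congr' ?_
  filter_upwards [htop] with m hm
  rw [scaledOrbit_apply hT, Fintype.sum_eq_add_sum_compl j₀, hm, add_sub_cancel_left]

theorem tendsto_scaledOrbit_of_gt (hlam : ‖lam‖ = 1) (hT : IsJordanBlock lam T)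
    (hsupp : ∀ j, v j ≠ 0 → j ≤ j₀) {k : ℕ} (hk : (j₀ : ℕ) < k) :
    Tendsto (scaledOrbit T v k) atTop (𝓝 0) :=
  tendsto_pi_nhds.2 fun _ => tendsto_scaledOrbit_apply_of_lt hlam hT fun j hj => by
    have := Fin.le_def.1 (hsupp j hj)
    omega

theorem tendsto_scaledOrbit_sub_single (hlam : ‖lam‖ = 1) (hT : IsJordanBlock lam T)
    (hsupp : ∀ j, v j ≠ 0 → j ≤ j₀) :
    Tendsto (fun m => scaledOrbit T v j₀ m - (lam ^ (m - j₀) * v j₀) • Pi.single ⟨0, j₀.pos⟩ 1)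
      atTop (𝓝 0) := by
  refine tendsto_pi_nhds.2 fun i => ?_
  rcases eq_or_ne i ⟨0, j₀.pos⟩ with rfl | hi
  · simpa using tendsto_scaledOrbit_apply_sub hlam hT hsupp (i := ⟨0, j₀.pos⟩) (zero_add _)
  · have hi0 : (i : ℕ) ≠ 0 := fun h => hi (Fin.ext h)
    simpa [hi] using tendsto_scaledOrbit_apply_of_lt hlam hT (k := j₀) fun j hj => by
      have := Fin.le_def.1 (hsupp j hj)
      omega

theorem exists_mapClusterPt_scaledOrbit_and_mem_span (hlam : ‖lam‖ = 1) (hT : IsJordanBlock lam T)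
    (hsupp : ∀ j, v j ≠ 0 → j ≤ j₀) (hj₀ : v j₀ ≠ 0) :
    (∃ p, MapClusterPt p atTop (scaledOrbit T v j₀)) ∧
      ∀ p, MapClusterPt p atTop (scaledOrbit T v j₀) →
        p ∈ ℂ ∙ Pi.single (⟨0, j₀.pos⟩ : Fin n) (1 : ℂ) ∧ p ≠ 0 := by
  set e₀ : Fin n → ℂ := Pi.single ⟨0, j₀.pos⟩ 1
  set S : Set (Fin n → ℂ) := ((ℂ ∙ e₀ : Submodule ℂ (Fin n → ℂ)) : Set (Fin n → ℂ)) ∩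
    Metric.sphere 0 ‖v j₀‖
  have hS : IsCompact S :=
    (isCompact_sphere 0 _).inter_left (Submodule.closed_of_finiteDimensional _)
  have hg : ∀ m : ℕ, (lam ^ (m - j₀) * v j₀) • e₀ ∈ S := fun m =>
    ⟨Submodule.smul_mem _ _ (Submodule.mem_span_singleton_self _),
      by simp [e₀, norm_smul, hlam, Pi.norm_single]⟩
  have hsub := tendsto_scaledOrbit_sub_single hlam hT hsupp
  refine ⟨?_, fun p hp => ?_⟩
  · obtain ⟨p, -, hp⟩ := hS.exists_mapClusterPt (f := (atTop : Filter ℕ))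
      (tendsto_principal.2 (Eventually.of_forall hg))
    exact ⟨p, hp.of_tendsto_sub (by simpa using hsub.neg)⟩
  · have hpS : p ∈ S :=
      hS.isClosed.mem_of_mapClusterPt (hp.of_tendsto_sub hsub) (Eventually.of_forall hg)
    exact ⟨hpS.1, Metric.ne_of_mem_sphere hpS.2 (norm_ne_zero_iff.2 hj₀)⟩

theorem not_mapClusterPt_scaledOrbit_of_lt (hlam : ‖lam‖ = 1) (hT : IsJordanBlock lam T)
    (hsupp : ∀ j, v j ≠ 0 → j ≤ j₀) (hj₀ : v j₀ ≠ 0) {k : ℕ} (hk : k < j₀) (p : Fin n → ℂ) :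
    ¬ MapClusterPt p atTop (scaledOrbit T v k) := by
  intro hp
  have hratio : Tendsto (fun m : ℕ => (m.choose k : ℂ) / m.choose j₀) atTop (𝓝 0) := by
    simpa [Function.comp_def] using
      (Complex.continuous_ofReal.tendsto 0).comp (tendsto_choose_div_choose_of_lt hk)
  have hscale : (fun m : ℕ => ((m.choose k : ℂ) / m.choose j₀) • scaledOrbit T v k m)
      =ᶠ[atTop] scaledOrbit T v j₀ := by
    filter_upwards [eventually_ge_atTop (j₀ : ℕ)] with m hm
    have hchoose : (m.choose k : ℂ) ≠ 0 := Nat.cast_ne_zero.2 (Nat.choose_pos (by omega)).ne'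
    simp only [scaledOrbit, smul_smul]
    congr 1
    field_simp
  have hzero : MapClusterPt 0 atTop
      fun m : ℕ => ((m.choose k : ℂ) / m.choose j₀) • scaledOrbit T v k m := by
    simpa [Function.comp_def] using (hp.prodMk_of_tendsto hratio).tendsto_comp
      ((continuous_snd.smul continuous_fst).tendsto (p, 0))
  exact ((exists_mapClusterPt_scaledOrbit_and_mem_span hlam hT hsupp hj₀).2 0
    (hscale.mapClusterPt_iff.1 hzero)).2 rfl

end ScaledOrbit

/-- Let `T` be the `n × n` Jordan block (`n > 1`) with eigenvalue `λ`, `|λ| = 1`, acting on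
`ℂⁿ` with standard basis `v_1, …, v_n`.  For every nonzero `v = Σ α_j v_j` there is a unique
`k(v) ∈ ℕ` such that the set of cluster points of the sequence `C(m, k(v))⁻¹ • Tᵐ(v)` is
(nonempty and) contained in `span{v_1} \ {0}`; explicitly `k(v) = max{ j : α_j ≠ 0 } - 1`
(in `0`-based indexing, the largest index `j₀` with `α_{j₀} ≠ 0`). -/
theorem jordan_block_unique_normalization (n : ℕ) (hn : 1 < n) (lam : ℂ)
    (hlam : ‖lam‖ = 1) (T : Matrix (Fin n) (Fin n) ℂ)
    (hT : ∀ i j : Fin n, T i j =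
      if (j : ℕ) = (i : ℕ) then lam else if (j : ℕ) = (i : ℕ) + 1 then 1 else 0)
    (v : Fin n → ℂ)
    (P : ℕ → Prop)
    (hP : ∀ k : ℕ, P k ↔
      ({p : Fin n → ℂ |
          MapClusterPt p atTop fun m : ℕ => ((m.choose k : ℂ))⁻¹ • (T ^ m).mulVec v}.Nonempty ∧
        {p : Fin n → ℂ |
          MapClusterPt p atTop fun m : ℕ => ((m.choose k : ℂ))⁻¹ • (T ^ m).mulVec v} ⊆
          ((Submodule.span ℂ {Pi.single (⟨0, by omega⟩ : Fin n) (1 : ℂ)} : Submodule ℂ (Fin n → ℂ)) : Set (Fin n → ℂ)) \ {0}))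
    (j₀ : Fin n) (hj₀ : v j₀ ≠ 0) (hmax : ∀ i : Fin n, j₀ < i → v i = 0) :
    (∃! k : ℕ, P k) ∧ P (j₀ : ℕ) := by
  have hsupp : ∀ j, v j ≠ 0 → j ≤ j₀ := fun j hj => not_lt.1 fun h => hj (hmax j h)
  have hPk : ∀ k, P k ↔ k = j₀ := by
    intro k
    rw [hP k]
    rcases lt_trichotomy k j₀ with hk | rfl | hk
    · exact iff_of_false (fun ⟨⟨p, hp⟩, _⟩ =>
        not_mapClusterPt_scaledOrbit_of_lt hlam hT hsupp hj₀ hk p hp) hk.ne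
    · have h := exists_mapClusterPt_scaledOrbit_and_mem_span hlam hT hsupp hj₀
      exact iff_of_true ⟨h.1, fun p hp => h.2 p hp⟩ rfl
    · refine iff_of_false (fun ⟨⟨p, hp⟩, hsub⟩ => ?_) hk.ne'
      exact (hsub hp).2 (hp.eq_of_tendsto (tendsto_scaledOrbit_of_gt hlam hT hsupp hk))
  exact ⟨⟨j₀, (hPk _).2 rfl, fun k => (hPk k).1⟩, (hPk _).2 rfl⟩
end

section
/- Let T be an invertible linear map on a finite-dimensional complex vector space V, all of whose eigenvalues have absolute value 1. Then for every nonzero v ∈ V there is a unique k(v,T) ∈ ℕ ∪ {0} such that the set of cluster points of the sequence C(m, k(v,T))^(−1) · T^m(v) is nonempty and contained in Eve(T) \ {0}, where Eve(T) is the span of the eigenvectors of T. -/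
/-!
Write `v = ∑ x_μ` with `x_μ` in the generalized eigenspace of `μ`, and let `k` be the largest
`j` with `(T - μ)^j x_μ ≠ 0` for some `μ`. The binomial formula gives
`Tᵐ x_μ = ∑_{j ≤ k} C(m,j) μ^(m-j) (T - μ)^j x_μ`; since `C(m,j) / C(m,k) → 0` for `j < k`
and `|μ| = 1`, the sequence `C(m,k)⁻¹ Tᵐ v` is asymptotic to `∑ μ^(m-k) w_μ`, where the
`w_μ = (T - μ)^k x_μ` are eigenvectors (or zero), not all zero. The sequence `∑ μ^t w_μ` stays
in the compact image of the torus `c ↦ ∑ c_μ w_μ`, `|c_μ| = 1`, so it has cluster points, all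
of them nonzero by linear independence of eigenvectors. For another exponent `k'` the ratio
`C(m,k) / C(m,k')` tends to `0` or `∞`, so the rescaled sequence tends to `0` or has no
cluster point at all.
-/

open Filter Topology

theorem Nat.tendsto_choose_succ_div_choose (k : ℕ) :
    Tendsto (fun m : ℕ => (m.choose (k + 1) : ℝ) / m.choose k) atTop atTop := by
  have hlin : Tendsto (fun m : ℕ => ((m - k : ℕ) : ℝ) / (k + 1)) atTop atTop :=
    (tendsto_natCast_atTop_atTop.comp (tendsto_sub_atTop_nat k)).atTop_div_const (by positivity)
  refine hlin.congr' ?_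
  filter_upwards [eventually_ge_atTop k] with m hm
  have hpos : (0 : ℝ) < m.choose k := by exact_mod_cast Nat.choose_pos hm
  rw [eq_div_iff hpos.ne', div_mul_eq_mul_div, div_eq_iff (by positivity), mul_comm]
  exact_mod_cast (Nat.choose_succ_right_eq m k).symm

theorem Nat.tendsto_choose_div_choose_atTop {k k' : ℕ} (h : k < k') :
    Tendsto (fun m : ℕ => (m.choose k' : ℝ) / m.choose k) atTop atTop := by
  induction k', h using Nat.le_induction with
  | base => exact Nat.tendsto_choose_succ_div_choose k
  | succ k' hk' ih =>
    refine ((Nat.tendsto_choose_succ_div_choose k').atTop_mul_atTop₀ ih).congr' ?_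
    filter_upwards [eventually_ge_atTop k'] with m hm
    have hpos : (0 : ℝ) < m.choose k' := by exact_mod_cast Nat.choose_pos hm
    rw [div_mul_div_cancel₀ hpos.ne']

theorem Nat.tendsto_choose_div_choose_zero {k k' : ℕ} (h : k < k') :
    Tendsto (fun m : ℕ => (m.choose k : ℝ) / m.choose k') atTop (𝓝 0) :=
  (Nat.tendsto_choose_div_choose_atTop h).inv_tendsto_atTop.congr fun _ => inv_div _ _

theorem mapClusterPt_iff_of_tendsto_sub {α G : Type*} [TopologicalSpace G] [AddGroup G]
    [IsTopologicalAddGroup G] {F : Filter α} {u w : α → G} {p : G}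
    (h : Tendsto (fun a => u a - w a) F (𝓝 0)) :
    MapClusterPt p F u ↔ MapClusterPt p F w := by
  have of_tendsto : ∀ {u w : α → G}, Tendsto (fun a => u a - w a) F (𝓝 0) →
      MapClusterPt p F w → MapClusterPt p F u := fun h hp => by
    obtain ⟨U, hUF, hU⟩ := mapClusterPt_iff_ultrafilter.1 hp
    refine mapClusterPt_iff_ultrafilter.2 ⟨U, hUF, ?_⟩
    simpa only [zero_add, sub_add_cancel] using (h.mono_left hUF).add hU
  exact ⟨of_tendsto (by simpa only [neg_sub, neg_zero] using h.neg), of_tendsto h⟩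

theorem not_mapClusterPt_of_tendsto_norm_atTop {α E : Type*} [SeminormedAddCommGroup E]
    {F : Filter α} {u : α → E} (h : Tendsto (fun a => ‖u a‖) F atTop) (p : E) :
    ¬MapClusterPt p F u := fun hp =>
  ((hp.continuousAt_comp continuous_norm.continuousAt).frequently
    (Iio_mem_nhds (lt_add_one ‖p‖))).and_eventually (h.eventually_ge_atTop (‖p‖ + 1))
    |>.exists.elim fun _ ⟨hlt, hge⟩ => lt_irrefl _ (hlt.trans_le hge)

namespace Module.End

section CommRing

variable {R M : Type*} [CommRing R] [AddCommGroup M] [Module R M] {f : End R M} {μ : R}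
  {k : ℕ} {x : M}

theorem pow_apply_eq_sum_choose (hx : ((f - μ • 1) ^ (k + 1)) x = 0) (m : ℕ) :
    (f ^ m) x =
      ∑ j ∈ Finset.range (k + 1), ((m.choose j : R) * μ ^ (m - j)) • ((f - μ • 1) ^ j) x := by
  set N := f - μ • 1
  set term : ℕ → M := fun j => ((m.choose j : R) * μ ^ (m - j)) • (N ^ j) x
  have hbinom : (f ^ m) x = ∑ j ∈ Finset.range (m + 1), term j := by
    rw [show f = N + μ • 1 by simp [N], ((Commute.one_right N).smul_right μ).add_pow,
      LinearMap.sum_apply]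
    refine Finset.sum_congr rfl fun j _ => ?_
    simp only [smul_pow, one_pow, Algebra.mul_smul_comm, mul_one, Algebra.smul_mul_assoc,
      LinearMap.smul_apply, mul_apply, natCast_apply, LinearMap.map_smul_of_tower, mul_smul,
      Nat.cast_smul_eq_nsmul, term]
    exact smul_comm _ _ _
  have hm : ∀ j ≥ m + 1, term j = 0 := fun j hj => by
    simp [term, Nat.choose_eq_zero_of_lt (Nat.lt_of_succ_le hj)]
  have hk : ∀ j ≥ k + 1, term j = 0 := fun j hj => by
    simp only [term]
    rw [← Nat.sub_add_cancel hj, pow_add, mul_apply, hx, map_zero, smul_zero]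
  rw [hbinom, ← Finset.eventually_constant_sum hm (le_max_left _ (k + 1)),
    Finset.eventually_constant_sum hk (le_max_right _ _)]

theorem pow_apply_mem_eigenspace_of_pow_succ_apply_eq_zero
    (hx : ((f - μ • 1) ^ (k + 1)) x = 0) : ((f - μ • 1) ^ k) x ∈ f.eigenspace μ := by
  rw [pow_succ', mul_apply] at hx
  simpa [mem_eigenspace_iff, sub_eq_zero] using hx

theorem hasEigenvalue_of_mem_maxGenEigenspace (hx : x ∈ f.maxGenEigenspace μ) (hx0 : x ≠ 0) :
    f.HasEigenvalue μ :=
  (hasUnifEigenvalue_iff_hasUnifEigenvalue_one (by simp)).1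
    (HasUnifEigenvector.hasUnifEigenvalue ⟨hx, hx0⟩)

end CommRing

theorem exists_pow_succ_apply_eq_zero_and_pow_apply_ne_zero {ι R M : Type*} [Semiring R]
    [AddCommMonoid M] [Module R M] {f : ι → End R M} {x : ι → M} {n : ℕ}
    (hn : ∀ i, (f i ^ n) (x i) = 0) (hx : ∃ i, x i ≠ 0) :
    ∃ k, (∀ i, (f i ^ (k + 1)) (x i) = 0) ∧ ∃ i, (f i ^ k) (x i) ≠ 0 := by
  classical
  have hP : ∃ n, ∀ i, (f i ^ n) (x i) = 0 := ⟨n, hn⟩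
  obtain ⟨k, hk⟩ : ∃ k, Nat.find hP = k + 1 := Nat.exists_eq_succ_of_ne_zero fun h0 => by
    obtain ⟨i, hi⟩ := hx
    exact hi (by simpa [h0] using Nat.find_spec hP i)
  refine ⟨k, hk ▸ Nat.find_spec hP, ?_⟩
  by_contra! h
  exact Nat.find_min hP (by omega) h

section Field

variable {K V : Type*} [Field K] [AddCommGroup V] [Module K V] {f : End K V}

theorem mem_span_eigenvectors_of_mem_eigenspace {μ : K} {x : V} (hx : x ∈ f.eigenspace μ) :
    x ∈ Submodule.span K {w | ∃ ν, f.HasEigenvector ν w} := by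
  rcases eq_or_ne x 0 with rfl | hx0
  · exact Submodule.zero_mem _
  · exact Submodule.subset_span ⟨μ, hx, hx0⟩

theorem sum_smul_ne_zero_of_mem_eigenspace {ι : Type*} [Fintype ι] {μ : ι → K}
    (hμ : Function.Injective μ) {w : ι → V} (hw : ∀ i, w i ∈ f.eigenspace (μ i))
    (hw0 : ∃ i, w i ≠ 0) {c : ι → K} (hc : ∀ i, c i ≠ 0) : ∑ i, c i • w i ≠ 0 := by
  classical
  obtain ⟨i₀, hi₀⟩ := hw0
  have hli : LinearIndependent K fun i : {i // w i ≠ 0} => w i :=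
    f.eigenvectors_linearIndependent' (μ ∘ Subtype.val) (hμ.comp Subtype.val_injective) _
      fun i => ⟨hw i.1, i.2⟩
  intro hsum
  refine hc i₀ (Fintype.linearIndependent_iff.1 hli (fun i => c i) ?_ ⟨i₀, hi₀⟩)
  rw [← Finset.sum_subtype (Finset.univ.filter fun i => w i ≠ 0) (by simp) fun i => c i • w i,
    Finset.sum_filter_of_ne (p := fun i => w i ≠ 0) fun i _ h hwi => h (by rw [hwi, smul_zero]),
    hsum]

end Field

end Module.End

section Normed

variable {𝕜 E : Type*} [RCLike 𝕜] [NormedAddCommGroup E] [NormedSpace 𝕜 E]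

theorem not_mapClusterPt_choose_inv_smul_of_lt {u : ℕ → E} {k k' : ℕ} (hk : k < k')
    (h0 : ¬MapClusterPt 0 atTop fun m : ℕ => (m.choose k' : 𝕜)⁻¹ • u m) (p : E) :
    ¬MapClusterPt p atTop fun m : ℕ => (m.choose k : 𝕜)⁻¹ • u m := by
  obtain ⟨ε, hε, hfar⟩ : ∃ ε > 0, ∀ᶠ m in atTop, ε ≤ ‖(m.choose k' : 𝕜)⁻¹ • u m‖ := by
    simpa [Metric.nhds_basis_ball.mapClusterPt_iff_frequently, Filter.not_frequently] using h0
  refine not_mapClusterPt_of_tendsto_norm_atTop ?_ p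
  refine tendsto_atTop_mono' _ ?_ ((Nat.tendsto_choose_div_choose_atTop hk).atTop_mul_const hε)
  filter_upwards [hfar, eventually_ge_atTop k'] with m hm hkm
  have hk'pos : (0 : ℝ) < m.choose k' := by exact_mod_cast Nat.choose_pos hkm
  have hkpos : (0 : ℝ) < m.choose k := by exact_mod_cast Nat.choose_pos (hk.le.trans hkm)
  calc (m.choose k' : ℝ) / m.choose k * ε
      ≤ (m.choose k' : ℝ) / m.choose k * ‖(m.choose k' : 𝕜)⁻¹ • u m‖ := by gcongr
    _ = ‖(m.choose k : 𝕜)⁻¹ • u m‖ := by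
      rw [norm_smul, norm_smul, norm_inv, norm_inv, RCLike.norm_natCast, RCLike.norm_natCast]
      field_simp

theorem eq_of_mapClusterPt_choose_inv_smul {u : ℕ → E} {k k' : ℕ}
    (h : ∃ p, MapClusterPt p atTop fun m : ℕ => (m.choose k : 𝕜)⁻¹ • u m)
    (h0 : ¬MapClusterPt 0 atTop fun m : ℕ => (m.choose k : 𝕜)⁻¹ • u m)
    (h' : ∃ p, MapClusterPt p atTop fun m : ℕ => (m.choose k' : 𝕜)⁻¹ • u m)
    (h0' : ¬MapClusterPt 0 atTop fun m : ℕ => (m.choose k' : 𝕜)⁻¹ • u m) : k = k' := by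
  obtain ⟨p, hp⟩ := h
  obtain ⟨p', hp'⟩ := h'
  rcases lt_trichotomy k k' with hlt | heq | hgt
  · exact absurd hp (not_mapClusterPt_choose_inv_smul_of_lt hlt h0' p)
  · exact heq
  · exact absurd hp' (not_mapClusterPt_choose_inv_smul_of_lt hgt h0 p')

variable {ι : Type*} [Fintype ι]

theorem isCompact_image_sum_smul_sphere (w : ι → E) :
    IsCompact ((fun c : ι → 𝕜 => ∑ i, c i • w i) ''
      Set.univ.pi fun _ => Metric.sphere (0 : 𝕜) 1) :=
  (isCompact_univ_pi fun _ => isCompact_sphere 0 1).image (by fun_prop)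

theorem sum_pow_smul_mem_image_sum_smul_sphere {μ : ι → 𝕜} (hμ : ∀ i, ‖μ i‖ = 1) (w : ι → E)
    (t : ℕ) : ∑ i, μ i ^ t • w i ∈ (fun c : ι → 𝕜 => ∑ i, c i • w i) ''
      Set.univ.pi fun _ => Metric.sphere (0 : 𝕜) 1 :=
  ⟨fun i => μ i ^ t, fun i _ => by simp [hμ], rfl⟩

theorem exists_mapClusterPt_sum_pow_smul {μ : ι → 𝕜} (hμ : ∀ i, ‖μ i‖ = 1) (w : ι → E) :
    ∃ p, MapClusterPt p atTop fun t : ℕ => ∑ i, μ i ^ t • w i :=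
  let ⟨p, _, hp⟩ := (isCompact_image_sum_smul_sphere w).exists_mapClusterPt
    (tendsto_principal.2 (Eventually.of_forall (sum_pow_smul_mem_image_sum_smul_sphere hμ w)))
  ⟨p, hp⟩

theorem MapClusterPt.exists_eq_sum_smul_of_sum_pow_smul {μ : ι → 𝕜} (hμ : ∀ i, ‖μ i‖ = 1)
    {w : ι → E} {p : E} (hp : MapClusterPt p atTop fun t : ℕ => ∑ i, μ i ^ t • w i) :
    ∃ c : ι → 𝕜, (∀ i, ‖c i‖ = 1) ∧ p = ∑ i, c i • w i := by
  obtain ⟨c, hc, rfl⟩ := (isCompact_image_sum_smul_sphere w).isClosed.mem_of_mapClusterPt hp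
    (Eventually.of_forall (sum_pow_smul_mem_image_sum_smul_sphere hμ w))
  exact ⟨c, fun i => by simpa using hc i (Set.mem_univ i), rfl⟩

namespace Module.End

variable {f : End 𝕜 E}

theorem tendsto_choose_inv_smul_pow_apply_sub {μ : 𝕜} (hμ : ‖μ‖ = 1) {k : ℕ} {x : E}
    (hx : ((f - μ • 1) ^ (k + 1)) x = 0) :
    Tendsto (fun m : ℕ => (m.choose k : 𝕜)⁻¹ • (f ^ m) x - μ ^ (m - k) • ((f - μ • 1) ^ k) x)
      atTop (𝓝 0) := by
  have hlower : ∀ j ∈ Finset.range k, Tendsto (fun m : ℕ =>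
      ((m.choose j : 𝕜) / m.choose k * μ ^ (m - j)) • ((f - μ • 1) ^ j) x) atTop (𝓝 0) := by
    intro j hj
    rw [tendsto_zero_iff_norm_tendsto_zero]
    simpa [norm_smul, hμ, RCLike.norm_natCast] using
      (Nat.tendsto_choose_div_choose_zero (Finset.mem_range.1 hj)).mul_const
        ‖((f - μ • 1) ^ j) x‖
  have hsum := tendsto_finsetSum _ hlower
  rw [Finset.sum_const_zero] at hsum
  refine hsum.congr' ?_
  filter_upwards [eventually_ge_atTop k] with m hm
  have hchoose : (m.choose k : 𝕜) ≠ 0 := Nat.cast_ne_zero.2 (Nat.choose_pos hm).ne'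
  rw [pow_apply_eq_sum_choose hx, Finset.sum_range_succ, smul_add, Finset.smul_sum, smul_smul,
    inv_mul_cancel_left₀ hchoose, add_sub_cancel_right]
  refine Finset.sum_congr rfl fun j _ => ?_
  rw [smul_smul, div_eq_inv_mul, mul_assoc]

theorem mapClusterPt_choose_inv_smul_pow_apply_sum_iff {μ : ι → 𝕜} (hμ : ∀ i, ‖μ i‖ = 1)
    {x : ι → E} {k : ℕ} (hk : ∀ i, ((f - μ i • 1) ^ (k + 1)) (x i) = 0) {p : E} :
    MapClusterPt p atTop (fun m : ℕ => (m.choose k : 𝕜)⁻¹ • (f ^ m) (∑ i, x i)) ↔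
      MapClusterPt p atTop fun t : ℕ => ∑ i, μ i ^ t • ((f - μ i • 1) ^ k) (x i) := by
  have h := tendsto_finsetSum Finset.univ fun i _ =>
    tendsto_choose_inv_smul_pow_apply_sub (hμ i) (hk i)
  simp only [Finset.sum_const_zero, Finset.sum_sub_distrib, ← Finset.smul_sum, ← map_sum] at h
  rw [mapClusterPt_iff_of_tendsto_sub h]
  conv_rhs => rw [← map_sub_atTop_eq_nat k]
  rfl

end Module.End

end Normed

theorem unique_normalization_of_unitary_eigenvalues_general (V : Type*) [NormedAddCommGroup V]
    [NormedSpace ℂ V] [FiniteDimensional ℂ V] (T : V →ₗ[ℂ] V)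
    (heig : ∀ μ : ℂ, Module.End.HasEigenvalue T μ → ‖μ‖ = 1)
    (Eve : Submodule ℂ V)
    (hEve : Eve = Submodule.span ℂ {w : V | ∃ μ : ℂ, Module.End.HasEigenvector T μ w})
    (v : V) (hv : v ≠ 0) :
    ∃! k : ℕ,
      {p : V | MapClusterPt p atTop fun m : ℕ => ((m.choose k : ℂ))⁻¹ • (T ^ m) v}.Nonempty ∧
        {p : V | MapClusterPt p atTop fun m : ℕ => ((m.choose k : ℂ))⁻¹ • (T ^ m) v} ⊆
          (Eve : Set V) \ {0} := by
  obtain ⟨c, hc, hcv⟩ := (Submodule.mem_iSup_iff_exists_finsupp _ v).1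
    ((Module.End.iSup_maxGenEigenspace_eq_top T).symm ▸ Submodule.mem_top)
  obtain rfl : ∑ μ : c.support, c μ = v := (Finset.sum_coe_sort _ _).trans hcv
  have hμ : ∀ μ : c.support, ‖(μ : ℂ)‖ = 1 := fun μ => heig μ <|
    Module.End.hasEigenvalue_of_mem_maxGenEigenspace (hc μ) (Finsupp.mem_support_iff.1 μ.2)
  obtain ⟨k, hk, hk'⟩ := Module.End.exists_pow_succ_apply_eq_zero_and_pow_apply_ne_zero
    (f := fun μ : c.support => T - (μ : ℂ) • 1) (x := fun μ => c μ)
    (fun μ => Module.End.mem_genEigenspace_nat.1 <|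
      Module.End.maxGenEigenspace_eq_genEigenspace_finrank T μ ▸ hc μ)
    (not_forall.1 fun h => hv (Finset.sum_eq_zero fun μ _ => h μ))
  have hw := fun μ => Module.End.pow_apply_mem_eigenspace_of_pow_succ_apply_eq_zero (hk μ)
  have hclust := fun p =>
    Module.End.mapClusterPt_choose_inv_smul_pow_apply_sum_iff (f := T) (p := p) hμ hk
  have hgood : ∀ p ∈ {p | MapClusterPt p atTop fun m : ℕ =>
      ((m.choose k : ℂ))⁻¹ • (T ^ m) (∑ μ : c.support, c μ)}, p ∈ (Eve : Set V) \ {0} := by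
    intro p hp
    obtain ⟨a, ha, rfl⟩ := ((hclust p).1 hp).exists_eq_sum_smul_of_sum_pow_smul hμ
    refine ⟨hEve ▸ Submodule.sum_mem _ fun μ _ => Submodule.smul_mem _ _
      (Module.End.mem_span_eigenvectors_of_mem_eigenspace (hw μ)), ?_⟩
    exact Module.End.sum_smul_ne_zero_of_mem_eigenspace Subtype.val_injective hw hk'
      fun μ => norm_ne_zero_iff.1 (by rw [ha μ]; exact one_ne_zero)
  have hex := (exists_mapClusterPt_sum_pow_smul hμ _).imp fun p => (hclust p).2
  exact ⟨k, ⟨hex, hgood⟩, fun k₁ hk₁ => (eq_of_mapClusterPt_choose_inv_smul hex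
    (fun h => (hgood 0 h).2 rfl) hk₁.1 fun h => (hk₁.2 h).2 rfl).symm⟩

/-- Let `T` be an invertible linear map on a finite-dimensional complex vector space `V`,
all of whose eigenvalues have absolute value `1`.  Then for every nonzero `v ∈ V` there is
a unique `k(v,T) ∈ ℕ` such that the set of cluster points of the sequence
`C(m, k(v,T))⁻¹ • Tᵐ(v)` is nonempty and contained in `Eve(T) \ {0}`, where `Eve(T)` is
the span of the eigenvectors of `T`. -/
theorem unique_normalization_of_unitary_eigenvalues (V : Type*) [NormedAddCommGroup V]
    [NormedSpace ℂ V] [FiniteDimensional ℂ V] (T : V →ₗ[ℂ] V)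
    (hT : Function.Bijective T)
    (heig : ∀ μ : ℂ, Module.End.HasEigenvalue T μ → ‖μ‖ = 1)
    (Eve : Submodule ℂ V)
    (hEve : Eve = Submodule.span ℂ {w : V | ∃ μ : ℂ, Module.End.HasEigenvector T μ w})
    (v : V) (hv : v ≠ 0) :
    ∃! k : ℕ,
      {p : V | MapClusterPt p atTop fun m : ℕ => ((m.choose k : ℂ))⁻¹ • (T ^ m) v}.Nonempty ∧
        {p : V | MapClusterPt p atTop fun m : ℕ => ((m.choose k : ℂ))⁻¹ • (T ^ m) v} ⊆
          (Eve : Set V) \ {0} :=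
  unique_normalization_of_unitary_eigenvalues_general V T heig Eve hEve v hv
end

section
/- Let Γ ≤ PSL(n+1,ℂ) be a Schottky group with F_k(Γ) = { γ(f) : f ∈ F(Γ), γ a reduced word of length at most k }. Then F(Γ) ⊂ Int(F_1(Γ)), the sets F_k(Γ) are increasing, and Ω(Γ) = ∪_{k≥0} Int(F_k(Γ)). -/
open Projectivization Matrix Filter Pointwise
open scoped LinearAlgebra.Projectivization

noncomputable section

/-- Complex projective space `ℙ^{N-1}_ℂ`, as the projectivization of `ℂ^N`. -/
abbrev PV (N : ℕ) := ℙ ℂ (Fin N → ℂ)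

instance (N : ℕ) : TopologicalSpace (PV N) :=
  inferInstanceAs (TopologicalSpace (Quotient _))

/-- The action of `SL(N, ℂ)` on projective space. -/
instance (N : ℕ) : SMul (SpecialLinearGroup (Fin N) ℂ) (PV N) :=
  ⟨fun A => Projectivization.map (SpecialLinearGroup.toLin' A).toLinearMap
      (SpecialLinearGroup.toLin' A).injective⟩

theorem SL_smul_mk {N : ℕ} (A : SpecialLinearGroup (Fin N) ℂ) (v : Fin N → ℂ) (hv : v ≠ 0) :
    A • Projectivization.mk ℂ v hv =
      Projectivization.mk ℂ (SpecialLinearGroup.toLin' A v)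
        (by simpa using (SpecialLinearGroup.toLin' A).map_ne_zero_iff.mpr hv) :=
  Projectivization.map_mk _ _ v hv

instance (N : ℕ) : MulAction (SpecialLinearGroup (Fin N) ℂ) (PV N) where
  one_smul x := by
    induction x using Projectivization.ind with
    | h v hv => rw [SL_smul_mk]; simp
  mul_smul A B x := by
    induction x using Projectivization.ind with
    | h v hv =>
      rw [SL_smul_mk, SL_smul_mk, SL_smul_mk]
      simp only [_root_.map_mul]
      rfl

theorem center_smul_eq {N : ℕ} {C : SpecialLinearGroup (Fin N) ℂ}
    (hC : C ∈ Subgroup.center (SpecialLinearGroup (Fin N) ℂ)) (x : PV N) : C • x = x := by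
  obtain ⟨r, hrN, hr⟩ := Matrix.SpecialLinearGroup.mem_center_iff.mp hC
  induction x using Projectivization.ind with
  | h v hv =>
    rcases Nat.eq_zero_or_pos N with hN | hN
    · subst hN
      exact absurd (Subsingleton.elim v 0) hv
    have hr0 : r ≠ 0 := by
      intro h0
      rw [h0, zero_pow (by simpa using hN.ne')] at hrN
      exact zero_ne_one hrN
    rw [SL_smul_mk]
    symm
    rw [Projectivization.mk_eq_mk_iff']
    refine ⟨r⁻¹, ?_⟩
    have hCv : SpecialLinearGroup.toLin' C v = r • v := by
      rw [SpecialLinearGroup.toLin'_apply, Matrix.toLin'_apply, ← hr]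
      ext i
      simp [Matrix.mulVec, dotProduct, Matrix.scalar_apply, Matrix.diagonal,
        Finset.sum_ite_eq]
    rw [hCv, smul_smul, inv_mul_cancel₀ hr0, one_smul]

/-- The projective special linear group `PSL(N, ℂ)`. -/
abbrev PSL (N : ℕ) :=
  SpecialLinearGroup (Fin N) ℂ ⧸ Subgroup.center (SpecialLinearGroup (Fin N) ℂ)

instance (N : ℕ) : SMul (PSL N) (PV N) :=
  ⟨fun g x => Quotient.liftOn' g (fun A => A • x) (by
    intro A B h
    rw [QuotientGroup.leftRel_apply] at h
    have hB : B = A * (A⁻¹ * B) := by group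
    rw [hB, mul_smul, center_smul_eq h])⟩

theorem PSL_mk_smul {N : ℕ} (A : SpecialLinearGroup (Fin N) ℂ) (x : PV N) :
    (QuotientGroup.mk A : PSL N) • x = A • x := rfl

instance (N : ℕ) : MulAction (PSL N) (PV N) where
  one_smul x := by
    rw [show (1 : PSL N) = QuotientGroup.mk 1 from rfl, PSL_mk_smul, one_smul]
  mul_smul g h x := by
    induction g using QuotientGroup.induction_on with
    | H A =>
      induction h using QuotientGroup.induction_on with
      | H B =>
        rw [show (QuotientGroup.mk A * QuotientGroup.mk B : PSL N) = QuotientGroup.mk (A * B)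
          from rfl, PSL_mk_smul, PSL_mk_smul, PSL_mk_smul, mul_smul]

/-- The data of a Schottky group in `PSL(N, ℂ)` acting on `ℙ^{N-1}_ℂ`:
`2g` open sets (`g ≥ 2`), each equal to the interior of its closure, with pairwise
disjoint closures, together with `g` generators `γ_j` satisfying
`γ_j (R_j) = ℙ^{N-1}_ℂ \ closure (S_j)`. -/
structure SchottkyData (N g : ℕ) where
  hg : 2 ≤ g
  R : Fin g → Set (PV N)
  S : Fin g → Set (PV N)
  gen : Fin g → PSL N
  Ropen : ∀ j, IsOpen (R j)
  Sopen : ∀ j, IsOpen (S j)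
  Rreg : ∀ j, interior (closure (R j)) = R j
  Sreg : ∀ j, interior (closure (S j)) = S j
  disj : Pairwise (Function.onFun Disjoint
    (Sum.elim (fun j => closure (R j)) (fun j => closure (S j)) : Fin g ⊕ Fin g → Set (PV N)))
  pair : ∀ j, gen j • R j = (closure (S j))ᶜ

namespace SchottkyData

variable {N g : ℕ}

/-- The Schottky group itself: the subgroup generated by the Schottky generators. -/
def Γ (D : SchottkyData N g) : Subgroup (PSL N) := Subgroup.closure (Set.range D.gen)

/-- The fundamental region `F(Γ) = ℙ^{N-1}_ℂ \ ⋃ⱼ (Rⱼ ∪ Sⱼ)`. -/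
def F (D : SchottkyData N g) : Set (PV N) := (⋃ j, D.R j ∪ D.S j)ᶜ

/-- The region `Ω(Γ) = ⋃_{γ ∈ Γ} γ (F(Γ))`. -/
def Ω (D : SchottkyData N g) : Set (PV N) := ⋃ γ ∈ D.Γ, γ • D.F

end SchottkyData

/-!
The closures of the `2g` pieces `Rⱼ, Sⱼ` are pairwise disjoint, so a point `x ∈ F` lies on the
boundary of at most one of them. If `x ∈ closure Sⱼ`, then a small neighbourhood of `x` avoids the
other pieces, while `γⱼ⁻¹` maps it to a neighbourhood of `γⱼ⁻¹ x ∈ closure Rⱼ` avoiding all pieces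
but `Rⱼ`; since `γⱼ⁻¹ (closure Sⱼ) = Rⱼᶜ`, the neighbourhood lies in `F ∪ γⱼ F` (symmetrically
`F ∪ γⱼ⁻¹ F` near `closure Rⱼ`). Hence `F ⊆ Int F₁`, and a reduced word `w` of length `k` gives
`w F ⊆ w (Int F₁) = Int (w F₁) ⊆ Int F_{k+1}`, which yields `Ω = ⋃ₖ Int Fₖ`.
-/

instance (N : ℕ) : ContinuousConstSMul (PSL N) (PV N) where
  continuous_const_smul γ := by
    induction γ using QuotientGroup.induction_on with
    | H A =>
      change Continuous (Projectivization.map (SpecialLinearGroup.toLin' A).toLinearMap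
        (SpecialLinearGroup.toLin' A).injective)
      exact Continuous.quotient_map' (Continuous.subtype_mk
        ((SpecialLinearGroup.toLin' A).toLinearMap.continuous_of_finiteDimensional.comp
          continuous_subtype_val) _) _

section WordBall

variable {G X : Type*} [Group G] [MulAction G X]

theorem Subgroup.exists_list_of_mem_closure {s : Set G} {γ : G} (hγ : γ ∈ Subgroup.closure s) :
    ∃ L : List G, (∀ a ∈ L, a ∈ s ∪ s⁻¹) ∧ L.prod = γ :=
  Submonoid.exists_list_of_mem_closure (by rwa [← Subgroup.closure_toSubmonoid])

/-- For `s` the generators of a Schottky group `Γ`, this is the paper's `F_k(Γ)`. -/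
def wordBall (s : Set G) (F : Set X) (k : ℕ) : Set X :=
  {y | ∃ L : List G, L.length ≤ k ∧ (∀ a ∈ L, a ∈ s ∪ s⁻¹) ∧ y ∈ L.prod • F}

variable {s : Set G} {F : Set X}

theorem wordBall_mono : Monotone (wordBall s F) :=
  fun _ _ hkm _ ⟨L, hL, hletters, hy⟩ => ⟨L, hL.trans hkm, hletters, hy⟩

theorem subset_wordBall (k : ℕ) : F ⊆ wordBall s F k :=
  fun y hy => ⟨[], Nat.zero_le k, by simp, by simpa using hy⟩

theorem smul_subset_wordBall_one {a : G} (ha : a ∈ s ∪ s⁻¹) : a • F ⊆ wordBall s F 1 :=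
  fun y hy => ⟨[a], le_rfl, by simpa using ha, by simpa using hy⟩

theorem list_prod_smul_wordBall_subset {L : List G} (hL : ∀ a ∈ L, a ∈ s ∪ s⁻¹) (k : ℕ) :
    L.prod • wordBall s F k ⊆ wordBall s F (L.length + k) := by
  rintro _ ⟨y, ⟨L', hL', hletters, hy⟩, rfl⟩
  refine ⟨L ++ L', by simpa using hL', fun a ha => ?_, ?_⟩
  · exact (List.mem_append.mp ha).elim (hL a) (hletters a)
  · rw [List.prod_append, mul_smul]
    exact Set.smul_mem_smul_set hy

theorem wordBall_subset_iUnion_smul (k : ℕ) :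
    wordBall s F k ⊆ ⋃ γ ∈ Subgroup.closure s, γ • F := by
  rintro y ⟨L, -, hletters, hy⟩
  have hclosure : s ∪ s⁻¹ ⊆ Subgroup.closure s :=
    Set.union_subset Subgroup.subset_closure (Subgroup.inv_subset_closure s)
  exact Set.mem_biUnion ((Subgroup.closure s).list_prod_mem fun a ha => hclosure (hletters a ha)) hy

theorem iUnion_interior_wordBall [TopologicalSpace X] [ContinuousConstSMul G X]
    (hF : F ⊆ interior (wordBall s F 1)) :
    ⋃ k, interior (wordBall s F k) = ⋃ γ ∈ Subgroup.closure s, γ • F := by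
  refine (Set.iUnion_subset fun k => interior_subset.trans (wordBall_subset_iUnion_smul k)).antisymm
    (Set.iUnion₂_subset fun γ hγ => ?_)
  obtain ⟨L, hL, rfl⟩ := Subgroup.exists_list_of_mem_closure hγ
  calc L.prod • F ⊆ L.prod • interior (wordBall s F 1) := Set.smul_set_mono hF
    _ = interior (L.prod • wordBall s F 1) := (interior_smul _ _).symm
    _ ⊆ interior (wordBall s F (L.length + 1)) :=
      interior_mono (list_prod_smul_wordBall_subset hL 1)
    _ ⊆ ⋃ k, interior (wordBall s F k) := Set.subset_iUnion_of_subset _ le_rfl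

end WordBall

section ListOfFn

variable {G ι : Type*} [Group G] {f : ι → G}

theorem mem_range_union_inv_iff {a : G} :
    a ∈ Set.range f ∪ (Set.range f)⁻¹ ↔ ∃ j, ∃ e : ℤ, (e = 1 ∨ e = -1) ∧ f j ^ e = a := by
  simp [Set.mem_inv, or_and_right, exists_or, inv_eq_iff_eq_inv]

theorem exists_ofFn_zpow_eq_iff {l : ℕ} {L : List G} :
    (∃ (z : Fin l → ι) (ε : Fin l → ℤ), (∀ i, ε i = 1 ∨ ε i = -1) ∧
      List.ofFn (fun i => f (z i) ^ ε i) = L) ↔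
      L.length = l ∧ ∀ a ∈ L, a ∈ Set.range f ∪ (Set.range f)⁻¹ := by
  constructor
  · rintro ⟨z, ε, hε, rfl⟩
    refine ⟨List.length_ofFn, fun a ha => ?_⟩
    obtain ⟨i, rfl⟩ := List.mem_ofFn.mp ha
    exact mem_range_union_inv_iff.mpr ⟨z i, ε i, hε i, rfl⟩
  · rintro ⟨rfl, hL⟩
    choose z ε hε hzε using fun i : Fin L.length =>
      mem_range_union_inv_iff.mp (hL _ (List.getElem_mem i.isLt))
    exact ⟨z, ε, hε, by simp [hzε]⟩

theorem wordBall_range_eq {X : Type*} [MulAction G X] (F : Set X) (k : ℕ) :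
    wordBall (Set.range f) F k = {y | ∃ l, l ≤ k ∧ ∃ (z : Fin l → ι) (ε : Fin l → ℤ),
      (∀ i, ε i = 1 ∨ ε i = -1) ∧ y ∈ (List.ofFn fun i => f (z i) ^ ε i).prod • F} := by
  ext y
  constructor
  · rintro ⟨L, hL, hletters, hy⟩
    obtain ⟨z, ε, hε, hzε⟩ := exists_ofFn_zpow_eq_iff.mpr ⟨rfl, hletters⟩
    exact ⟨_, hL, z, ε, hε, hzε.symm ▸ hy⟩
  · rintro ⟨l, hl, z, ε, hε, hy⟩
    obtain ⟨hlen, hletters⟩ := (exists_ofFn_zpow_eq_iff (f := f)).mp ⟨z, ε, hε, rfl⟩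
    exact ⟨_, hlen.trans_le hl, hletters, hy⟩

end ListOfFn

open scoped Topology

namespace SchottkyData

variable {N g : ℕ} (D : SchottkyData N g)

def piece : Fin g ⊕ Fin g → Set (PV N) := Sum.elim D.R D.S

def letter : Fin g ⊕ Fin g → PSL N := Sum.elim (fun j => (D.gen j)⁻¹) D.gen

theorem F_eq_compl_iUnion_piece : D.F = (⋃ i, D.piece i)ᶜ := by
  rw [F, Set.iUnion_sum, Set.iUnion_union_distrib]
  rfl

theorem interior_closure_piece (i : Fin g ⊕ Fin g) :
    interior (closure (D.piece i)) = D.piece i := by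
  cases i
  exacts [D.Rreg _, D.Sreg _]

theorem disjoint_closure_piece {i i' : Fin g ⊕ Fin g} (h : i ≠ i') :
    Disjoint (closure (D.piece i)) (closure (D.piece i')) := by
  have := D.disj h
  cases i <;> cases i' <;> exact this

theorem letter_mem (i : Fin g ⊕ Fin g) : D.letter i ∈ Set.range D.gen ∪ (Set.range D.gen)⁻¹ := by
  cases i
  exacts [Or.inr ⟨_, (inv_inv _).symm⟩, Or.inl ⟨_, rfl⟩]

theorem letter_smul_piece_swap (i : Fin g ⊕ Fin g) :
    D.letter i • D.piece i.swap = (closure (D.piece i))ᶜ := by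
  cases i with
  | inr j => exact D.pair j
  | inl j =>
    have h : D.gen j • closure (D.R j) = (D.S j)ᶜ := by
      rw [← closure_smul, D.pair, closure_compl, D.Sreg]
    calc (D.gen j)⁻¹ • D.S j = (D.gen j)⁻¹ • D.gen j • (closure (D.R j))ᶜ := by
          rw [Set.smul_set_compl, h, compl_compl]
      _ = (closure (D.R j))ᶜ := inv_smul_smul _ _

theorem letter_smul_closure_piece_swap (i : Fin g ⊕ Fin g) :
    D.letter i • closure (D.piece i.swap) = (D.piece i)ᶜ := by
  rw [← closure_smul, letter_smul_piece_swap, closure_compl, interior_closure_piece]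

theorem notMem_piece_of_mem_F {x : PV N} (hx : x ∈ D.F) (i : Fin g ⊕ Fin g) : x ∉ D.piece i :=
  fun hxi => (D.F_eq_compl_iUnion_piece ▸ hx) (Set.mem_iUnion_of_mem i hxi)

theorem mem_F_of_notMem_closure_piece {y : PV N} {i : Fin g ⊕ Fin g} (hy : y ∉ D.piece i)
    (hothers : ∀ i' ≠ i, y ∉ closure (D.piece i')) : y ∈ D.F := by
  rw [F_eq_compl_iUnion_piece, Set.mem_compl_iff, Set.mem_iUnion, not_exists]
  intro i' hi'
  rcases eq_or_ne i' i with rfl | hne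
  exacts [hy hi', hothers i' hne (subset_closure hi')]

theorem eventually_notMem_closure_piece_of_ne {x : PV N} {i : Fin g ⊕ Fin g}
    (hx : x ∈ closure (D.piece i)) : ∀ᶠ y in 𝓝 x, ∀ i' ≠ i, y ∉ closure (D.piece i') := by
  refine eventually_all.2 fun i' => ?_
  rcases eq_or_ne i' i with rfl | hne
  · exact .of_forall fun _ h => absurd rfl h
  · refine eventually_of_mem (isClosed_closure.isOpen_compl.mem_nhds ?_) fun _ hy _ => hy
    exact Set.disjoint_right.mp (D.disjoint_closure_piece hne) hx

theorem F_union_letter_smul_F_mem_nhds {x : PV N} {i : Fin g ⊕ Fin g} (hx : x ∈ D.F)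
    (hxi : x ∈ closure (D.piece i)) : D.F ∪ D.letter i • D.F ∈ 𝓝 x := by
  have hxi' : (D.letter i)⁻¹ • x ∈ closure (D.piece i.swap) := by
    rw [← Set.mem_smul_set_iff_inv_smul_mem, letter_smul_closure_piece_swap]
    exact D.notMem_piece_of_mem_F hx i
  have hnear : ∀ᶠ y in 𝓝 x, ∀ i' ≠ i.swap, (D.letter i)⁻¹ • y ∉ closure (D.piece i') :=
    ((continuous_const_smul _).tendsto x).eventually (D.eventually_notMem_closure_piece_of_ne hxi')
  filter_upwards [D.eventually_notMem_closure_piece_of_ne hxi, hnear] with y hy hy'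
  by_cases hyi : y ∈ closure (D.piece i)
  · refine Or.inr (Set.mem_smul_set_iff_inv_smul_mem.mpr (D.mem_F_of_notMem_closure_piece ?_ hy'))
    rw [← Set.mem_smul_set_iff_inv_smul_mem, letter_smul_piece_swap]
    exact not_not.mpr hyi
  · exact Or.inl (D.mem_F_of_notMem_closure_piece (fun h => hyi (subset_closure h)) hy)

theorem F_subset_interior : D.F ⊆ interior (D.F ∪ ⋃ i, D.letter i • D.F) := by
  intro x hx
  rw [mem_interior_iff_mem_nhds]
  by_cases hboundary : ∃ i, x ∈ closure (D.piece i)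
  · obtain ⟨i, hi⟩ := hboundary
    exact mem_of_superset (D.F_union_letter_smul_F_mem_nhds hx hi)
      (Set.union_subset_union_right _ (Set.subset_iUnion (fun i => D.letter i • D.F) i))
  · push Not at hboundary
    filter_upwards [eventually_all.2 fun i => isClosed_closure.isOpen_compl.mem_nhds (hboundary i)]
      with y hy
    refine Or.inl (D.F_eq_compl_iUnion_piece ▸ fun hmem => ?_)
    obtain ⟨i, hi⟩ := Set.mem_iUnion.mp hmem
    exact hy i (subset_closure hi)

end SchottkyData

/-- With `F_k(Γ) = { γ(f) : f ∈ F(Γ), γ a word of length at most k in the generators }`,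
one has `F(Γ) ⊆ Int (F_1(Γ))`, the `F_k(Γ)` are increasing, and
`Ω(Γ) = ⋃_{k ≥ 0} Int (F_k(Γ))`. -/
theorem schottky_exhaustion (n g : ℕ) (D : SchottkyData (n + 1) g)
    (Fk : ℕ → Set (PV (n + 1)))
    (hFk : ∀ k : ℕ, Fk k = {y : PV (n + 1) | ∃ l : ℕ, l ≤ k ∧
      ∃ (z : Fin l → Fin g) (ε : Fin l → ℤ), (∀ i, ε i = 1 ∨ ε i = -1) ∧
        y ∈ (List.ofFn fun i => D.gen (z i) ^ ε i).prod • D.F}) :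
    D.F ⊆ interior (Fk 1) ∧ Monotone Fk ∧ D.Ω = ⋃ k : ℕ, interior (Fk k) := by
  obtain rfl : Fk = wordBall (Set.range D.gen) D.F :=
    funext fun k => (hFk k).trans (wordBall_range_eq D.F k).symm
  have hF : D.F ⊆ interior (wordBall (Set.range D.gen) D.F 1) :=
    D.F_subset_interior.trans <| interior_mono <| Set.union_subset (subset_wordBall 1) <|
      Set.iUnion_subset fun i => smul_subset_wordBall_one (D.letter_mem i)
  exact ⟨hF, wordBall_mono, (iUnion_interior_wordBall hF).symm⟩
end
end
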